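/- With F^s and F^{s,j}_{Q_k} as above, fix a cube Q_l ∈ F^s and an integer j ≥ 0. Then the number of cubes Q_k ∈ F^{s₀} such that Q_l ∈ F^{s,j}_{Q_k} is at most C·2^{j(n−1)}, where C depends only on n and K. -/

import Mathlib

open Set Metric MeasureTheory

def cube (n : ℕ) (c : EuclideanSpace ℝ (Fin n)) (r : ℝ) : Set (EuclideanSpace ℝ (Fin n)) :=
  {x | ∀ i, |x i - c i| ≤ r}

noncomputable def sDist {α : Type*} [PseudoMetricSpace α] (s t : Set α) : ℝ :=
  sInf {d : ℝ | ∃ x ∈ s, ∃ y ∈ t, d = dist x y}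

def IsWhitneyOf (n : ℕ) (Ω : Set (EuclideanSpace ℝ (Fin n)))
    (c : ℕ → EuclideanSpace ℝ (Fin n)) (r : ℕ → ℝ) : Prop :=
  (∀ k, 0 < r k) ∧
  Ω = ⋃ k, cube n (c k) (r k) ∧
  (∀ k l, k ≠ l → interior (cube n (c k) (r k)) ∩ interior (cube n (c l) (r l)) = ∅) ∧
  (∀ k, Metric.diam (cube n (c k) (r k)) ≤ sDist (cube n (c k) (r k)) (frontier Ω) ∧
    sDist (cube n (c k) (r k)) (frontier Ω) ≤ 4 * Metric.diam (cube n (c k) (r k)))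

def IsLipGraphDomain (d : ℕ) (K : ℝ) (Ω : Set (EuclideanSpace ℝ (Fin (d + 1))))
    (φ : EuclideanSpace ℝ (Fin d) → ℝ) : Prop :=
  (∀ x' ∈ ball (0 : EuclideanSpace ℝ (Fin d)) 1, |φ x'| ≤ K) ∧
  (∀ x' ∈ ball (0 : EuclideanSpace ℝ (Fin d)) 1, ∀ y' ∈ ball (0 : EuclideanSpace ℝ (Fin d)) 1,
    |φ x' - φ y'| ≤ K * dist x' y') ∧
  Ω ∩ ball 0 1 =
    {x : EuclideanSpace ℝ (Fin (d + 1)) | φ (WithLp.toLp 2 (fun i : Fin d => x i.castSucc)) < x (Fin.last d)} ∩ ball 0 1 ∧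
  frontier Ω ∩ ball 0 1 =
    {x : EuclideanSpace ℝ (Fin (d + 1)) | x (Fin.last d) = φ (WithLp.toLp 2 (fun i : Fin d => x i.castSucc))} ∩ ball 0 1

/-- Membership of the `k`-th Whitney cube in the family `F^s`:
`2^{-s-1} < d_k ≤ 2^{-s}` and `Q̃_k ⊆ Ω ∩ B_{1/4}`. -/
def memF (d : ℕ) (Ω : Set (EuclideanSpace ℝ (Fin (d + 1))))
    (c : ℕ → EuclideanSpace ℝ (Fin (d + 1))) (r : ℕ → ℝ) (s : ℤ) (k : ℕ) : Prop :=
  (2 : ℝ) ^ (-s - 1) < Metric.diam (cube (d + 1) (c k) (r k)) ∧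
  Metric.diam (cube (d + 1) (c k) (r k)) ≤ (2 : ℝ) ^ (-s) ∧
  cube (d + 1) (c k) (6 / 5 * r k) ⊆ Ω ∩ ball 0 (1 / 4)

/-- Membership of the `l`-th Whitney cube in the family `F^{s,j}_{Q_k}`, for a fixed
reference cube `Q_k ∈ F^{s₀}`: `Q_l ∈ F^s` with `dist(Q_l, Q_k) ≤ 2^{-s₀+5}` when `j = 0`,
and `2^{-s₀+j+4} < dist(Q_l, Q_k) ≤ 2^{-s₀+j+5}` when `j ≥ 1`. -/
def memFsj (d : ℕ) (Ω : Set (EuclideanSpace ℝ (Fin (d + 1))))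
    (c : ℕ → EuclideanSpace ℝ (Fin (d + 1))) (r : ℕ → ℝ)
    (s₀ : ℤ) (k : ℕ) (s : ℤ) (j : ℕ) (l : ℕ) : Prop :=
  memF d Ω c r s l ∧
    (if j = 0 then
      sDist (cube (d + 1) (c l) (r l)) (cube (d + 1) (c k) (r k)) ≤ (2 : ℝ) ^ (-s₀ + 5)
    else
      (2 : ℝ) ^ (-s₀ + (j : ℤ) + 4) <
          sDist (cube (d + 1) (c l) (r l)) (cube (d + 1) (c k) (r k)) ∧
        sDist (cube (d + 1) (c l) (r l)) (cube (d + 1) (c k) (r k)) ≤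
          (2 : ℝ) ^ (-s₀ + (j : ℤ) + 5))

/-!
A cube `Q_k ∈ F^{s₀}` has size `≈ δ = 2^{-s₀}` and, being a Whitney cube, lies within `6δ` of the
boundary. As `dist(Q_l, Q_k) = O(2^j δ)` for every counted `Q_k`, Whitney's condition on `Q_l`
gives `diam Q_l = O(2^j δ)`, so all counted cubes lie in a ball of radius `O(2^j δ)` around `Q_l`.
When `δ ≤ 1/8` the boundary near them is the graph of `φ`, so they lie in a slab of height
`O((1 + K) δ)` over a horizontal box of side `O(2^j δ)`; that slab is covered by `O(2^{jd})` cubes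
of side `O((1 + K) δ)`, while the counted cubes have disjoint interiors of volume `≳ δ^{d+1}`.
When `δ > 1/8` the counted cubes are disjoint cubes of size `≳ 1` inside `B_{1/4}`.
-/

local notation "𝔼" n:max => EuclideanSpace ℝ (Fin n)

section Cube

variable {n : ℕ}

lemma abs_apply_sub_le_dist (x y : 𝔼 n) (i : Fin n) : |x i - y i| ≤ dist x y := by
  simpa only [Real.dist_eq] using PiLp.dist_apply_le x y i

lemma dist_le_sqrt_mul_of_forall_abs_sub_le {x y : 𝔼 n} {t : ℝ} (ht : 0 ≤ t)
    (h : ∀ i, |x i - y i| ≤ t) : dist x y ≤ √n * t := by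
  rw [EuclideanSpace.dist_eq, ← Real.sqrt_sq ht, ← Real.sqrt_mul n.cast_nonneg]
  gcongr
  calc ∑ i, dist (x i) (y i) ^ 2 ≤ ∑ _i : Fin n, t ^ 2 :=
        Finset.sum_le_sum fun i _ => pow_le_pow_left₀ dist_nonneg (h i) 2
    _ = n * t ^ 2 := by simp

lemma mem_cube_self (c : 𝔼 n) {r : ℝ} (hr : 0 ≤ r) : c ∈ cube n c r := fun i => by
  simpa using hr

lemma cube_mono (c : 𝔼 n) {r r' : ℝ} (h : r ≤ r') : cube n c r ⊆ cube n c r' :=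
  fun _ hx i => (hx i).trans h

lemma ball_zero_subset_cube_zero (r : ℝ) : ball (0 : 𝔼 n) r ⊆ cube n 0 r := fun x hx i => by
  simpa using (abs_apply_sub_le_dist x 0 i).trans (mem_ball.1 hx).le

lemma cube_subset_closedBall (c : 𝔼 n) {r : ℝ} (hr : 0 ≤ r) :
    cube n c r ⊆ closedBall c (√n * r) :=
  fun _ hx => dist_le_sqrt_mul_of_forall_abs_sub_le hr hx

lemma isBounded_cube (c : 𝔼 n) {r : ℝ} (hr : 0 ≤ r) : Bornology.IsBounded (cube n c r) :=
  isBounded_closedBall.subset (cube_subset_closedBall c hr)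

lemma diam_cube_le (c : 𝔼 n) {r : ℝ} (hr : 0 ≤ r) : diam (cube n c r) ≤ 2 * √n * r := by
  refine diam_le_of_forall_dist_le (by positivity) fun x hx y hy => ?_
  have h : ∀ i, |x i - y i| ≤ 2 * r := fun i => by
    linarith [abs_sub_le (x i) (c i) (y i), abs_sub_comm (y i) (c i), hx i, hy i]
  linarith [dist_le_sqrt_mul_of_forall_abs_sub_le (by positivity) h]

lemma dist_le_diam_cube {c x : 𝔼 n} {r : ℝ} (hr : 0 ≤ r) (hx : x ∈ cube n c r) :
    dist x c ≤ diam (cube n c r) :=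
  dist_le_diam_of_mem (isBounded_cube c hr) hx (mem_cube_self c hr)

lemma cube_eq_preimage_closedBall (c : 𝔼 n) {r : ℝ} (hr : 0 ≤ r) :
    cube n c r = WithLp.ofLp ⁻¹' closedBall (WithLp.ofLp c) r := by
  ext x
  simp [cube, dist_pi_le_iff hr, Real.dist_eq]

lemma preimage_ball_subset_cube (c : 𝔼 n) {r : ℝ} (hr : 0 < r) :
    WithLp.ofLp ⁻¹' ball (WithLp.ofLp c) r ⊆ cube n c r := by
  rw [cube_eq_preimage_closedBall c hr.le]
  exact preimage_mono ball_subset_closedBall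

lemma volume_cube (c : 𝔼 n) {r : ℝ} (hr : 0 ≤ r) :
    volume (cube n c r) = ENNReal.ofReal ((2 * r) ^ n) := by
  rw [cube_eq_preimage_closedBall c hr, (PiLp.volume_preserving_ofLp (Fin n)).measure_preimage
    measurableSet_closedBall.nullMeasurableSet, Real.volume_pi_closedBall _ hr, Fintype.card_fin]

lemma volume_interior_cube_ge (c : 𝔼 n) {r : ℝ} (hr : 0 < r) :
    ENNReal.ofReal ((2 * r) ^ n) ≤ volume (interior (cube n c r)) := by
  have hopen : IsOpen (WithLp.ofLp ⁻¹' ball (WithLp.ofLp c) r : Set (𝔼 n)) :=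
    isOpen_ball.preimage (PiLp.continuous_ofLp 2 _)
  calc ENNReal.ofReal ((2 * r) ^ n)
      = volume (WithLp.ofLp ⁻¹' ball (WithLp.ofLp c) r : Set (𝔼 n)) := by
        rw [(PiLp.volume_preserving_ofLp (Fin n)).measure_preimage
          measurableSet_ball.nullMeasurableSet, Real.volume_pi_ball _ hr, Fintype.card_fin]
    _ ≤ volume (interior (cube n c r)) :=
        measure_mono (interior_maximal (preimage_ball_subset_cube c hr) hopen)

end Cube

section SetDist

variable {α : Type*} [PseudoMetricSpace α] {s t : Set α}

lemma sDist_le_dist {x y : α} (hx : x ∈ s) (hy : y ∈ t) : sDist s t ≤ dist x y :=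
  csInf_le ⟨0, by rintro _ ⟨x, -, y, -, rfl⟩; exact dist_nonneg⟩ ⟨x, hx, y, hy, rfl⟩

lemma exists_dist_lt_of_sDist_lt (hs : s.Nonempty) (ht : t.Nonempty) {m : ℝ}
    (h : sDist s t < m) : ∃ x ∈ s, ∃ y ∈ t, dist x y < m := by
  obtain ⟨x, hx⟩ := hs
  obtain ⟨y, hy⟩ := ht
  obtain ⟨_, ⟨x, hx, y, hy, rfl⟩, hlt⟩ :=
    exists_lt_of_csInf_lt (s := {d | ∃ x ∈ s, ∃ y ∈ t, d = dist x y}) ⟨_, x, hx, y, hy, rfl⟩ h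
  exact ⟨x, hx, y, hy, hlt⟩

lemma sDist_comm (s t : Set α) : sDist s t = sDist t s := by
  simp only [sDist]
  congr 1
  ext
  exact ⟨fun ⟨x, hx, y, hy, h⟩ => ⟨y, hy, x, hx, h.trans (dist_comm x y)⟩,
    fun ⟨x, hx, y, hy, h⟩ => ⟨y, hy, x, hx, h.trans (dist_comm x y)⟩⟩

lemma exists_forall_dist_lt_of_sDist_lt (hs : Bornology.IsBounded s) (hsne : s.Nonempty)
    (ht : t.Nonempty) {m : ℝ} (h : sDist s t < m) : ∃ y ∈ t, ∀ x ∈ s, dist x y < diam s + m := by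
  obtain ⟨a, ha, y, hy, hay⟩ := exists_dist_lt_of_sDist_lt hsne ht h
  exact ⟨y, hy, fun x hx => (dist_triangle x a y).trans_lt
    (add_lt_add_of_le_of_lt (dist_le_diam_of_mem hs hx ha) hay)⟩

end SetDist

lemma finite_and_ncard_le_of_pairwiseDisjoint {X ι : Type*} [MeasurableSpace X] (μ : Measure X)
    {A : Set ι} {U : ι → Set X} {S : Set X} {v V : ℝ} (hv : 0 < v) (hV : 0 ≤ V)
    (hmeas : ∀ i ∈ A, MeasurableSet (U i)) (hdisj : A.PairwiseDisjoint U)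
    (hvol : ∀ i ∈ A, ENNReal.ofReal v ≤ μ (U i)) (hsub : ∀ i ∈ A, U i ⊆ S)
    (hS : μ S ≤ ENNReal.ofReal V) :
    A.Finite ∧ (A.ncard : ℝ) ≤ V / v := by
  have key : ∑' _ : A, ENNReal.ofReal v ≤ ENNReal.ofReal V :=
    calc ∑' _ : A, ENNReal.ofReal v ≤ ∑' i : A, μ (U i) := ENNReal.tsum_le_tsum fun i => hvol i i.2
      _ ≤ μ (⋃ i : A, U i) := tsum_meas_le_meas_iUnion_of_disjoint μ (fun i => hmeas i i.2)
          fun i j hij => hdisj i.2 j.2 (Subtype.coe_ne_coe.2 hij)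
      _ ≤ μ S := measure_mono (iUnion_subset fun i => hsub i i.2)
      _ ≤ ENNReal.ofReal V := hS
  have hfin : A.Finite := by
    by_contra hA
    have : Infinite A := infinite_coe_iff.2 hA
    rw [ENNReal.tsum_const_eq_top_of_ne_zero (ENNReal.ofReal_pos.2 hv).ne'] at key
    exact ENNReal.ofReal_ne_top (top_le_iff.1 key)
  have : Fintype A := hfin.fintype
  rw [tsum_fintype, Finset.sum_const, Finset.card_univ, nsmul_eq_mul, ← ENNReal.ofReal_natCast,
    ← ENNReal.ofReal_mul (by positivity), ENNReal.ofReal_le_ofReal_iff hV] at key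
  rw [← Nat.card_coe_set_eq, Nat.card_eq_fintype_card, le_div_iff₀ hv]
  exact ⟨hfin, key⟩

lemma exists_fin_le_le_add_one {N : ℕ} (hN : 0 < N) {t : ℝ} (h0 : 0 ≤ t) (hN' : t ≤ N) :
    ∃ u : Fin N, (u : ℝ) ≤ t ∧ t ≤ u + 1 := by
  rcases lt_or_ge ⌊t⌋₊ N with hlt | hge
  · exact ⟨⟨⌊t⌋₊, hlt⟩, Nat.floor_le h0, (Nat.lt_floor_add_one t).le⟩
  · have ht : t = N := hN'.antisymm ((Nat.cast_le.2 hge).trans (Nat.floor_le h0))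
    refine ⟨⟨N - 1, Nat.sub_lt hN one_pos⟩, ?_⟩
    simp [ht, Nat.cast_sub (Nat.one_le_iff_ne_zero.2 hN.ne')]

lemma exists_fin_abs_sub_le {N : ℕ} (hN : 0 < N) {a w t : ℝ} (hw : 0 < w) (ht : |t - a| ≤ N * w) :
    ∃ u : Fin N, |t - (a + (2 * u + 1 - N) * w)| ≤ w := by
  obtain ⟨u, hu₁, hu₂⟩ := exists_fin_le_le_add_one hN (t := (t - a + N * w) / (2 * w))
    (by rw [le_div_iff₀ (by positivity)]; linarith [neg_abs_le (t - a)])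
    (by rw [div_le_iff₀ (by positivity)]; linarith [le_abs_self (t - a)])
  refine ⟨u, abs_le.2 ⟨?_, ?_⟩⟩
  · rw [le_div_iff₀ (by positivity)] at hu₁; linarith
  · rw [div_le_iff₀ (by positivity)] at hu₂; linarith

section Graph

variable {d : ℕ}

def horizontal (x : 𝔼 (d + 1)) : 𝔼 d := WithLp.toLp 2 fun i => x i.castSucc

@[simp]
lemma horizontal_zero : horizontal (0 : 𝔼 (d + 1)) = 0 := rfl

lemma dist_horizontal_le (x y : 𝔼 (d + 1)) : dist (horizontal x) (horizontal y) ≤ dist x y := by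
  rw [EuclideanSpace.dist_eq, EuclideanSpace.dist_eq, Fin.sum_univ_castSucc]
  gcongr
  exact le_add_of_nonneg_right (sq_nonneg _)

lemma norm_horizontal_le (x : 𝔼 (d + 1)) : ‖horizontal x‖ ≤ ‖x‖ := by
  simpa using dist_horizontal_le x 0

variable {K : ℝ} {φ : 𝔼 d → ℝ}

lemma abs_last_sub_le_of_mem_graph
    (hφ : ∀ x ∈ ball (0 : 𝔼 d) 1, ∀ y ∈ ball (0 : 𝔼 d) 1, |φ x - φ y| ≤ K * dist x y)
    (hK : 0 ≤ K) {x y : 𝔼 (d + 1)} (hx : horizontal x ∈ ball 0 1) (hy : horizontal y ∈ ball 0 1)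
    (hgraph : y (Fin.last d) = φ (horizontal y)) :
    |x (Fin.last d) - φ (horizontal x)| ≤ (1 + K) * dist x y := by
  have hlast := abs_apply_sub_le_dist x y (Fin.last d)
  have hφxy := (hφ _ hx _ hy).trans (mul_le_mul_of_nonneg_left (dist_horizontal_le x y) hK)
  rw [hgraph] at hlast
  linarith [abs_sub_le (x (Fin.last d)) (φ (horizontal y)) (φ (horizontal x)),
    abs_sub_comm (φ (horizontal y)) (φ (horizontal x))]

def graphLift (φ : 𝔼 d → ℝ) (z : 𝔼 d) : 𝔼 (d + 1) :=
  WithLp.toLp 2 (Fin.snoc (α := fun _ => ℝ) (fun i => z i) (φ z))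

def gridPoint (p : 𝔼 d) (N : ℕ) (w : ℝ) (v : Fin d → Fin N) : 𝔼 d :=
  WithLp.toLp 2 fun i => p i + (2 * v i + 1 - N) * w

def graphSlab (φ : 𝔼 d → ℝ) (p : 𝔼 d) (R h : ℝ) : Set (𝔼 (d + 1)) :=
  {x | (∀ i, |x i.castSucc - p i| ≤ R) ∧ |x (Fin.last d) - φ (horizontal x)| ≤ h}

lemma graphSlab_inter_ball_subset_iUnion_cube
    (hφ : ∀ x ∈ ball (0 : 𝔼 d) 1, ∀ y ∈ ball (0 : 𝔼 d) 1, |φ x - φ y| ≤ K * dist x y)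
    (hK : 0 ≤ K) {N : ℕ} (hN : 0 < N) {w R h : ℝ} (hw : 0 < w) (hR : R ≤ N * w) (p : 𝔼 d) :
    graphSlab φ p R h ∩ ball 0 (1 - √d * w) ⊆
      ⋃ v : Fin d → Fin N,
        cube (d + 1) (graphLift φ (gridPoint p N w v)) (h + (1 + K * √d) * w) := by
  rintro x ⟨⟨hhor, hlast⟩, hx⟩
  choose v hv using fun i => exists_fin_abs_sub_le hN hw ((hhor i).trans hR)
  set z := gridPoint p N w v
  have hxz : dist (horizontal x) z ≤ √d * w := dist_le_sqrt_mul_of_forall_abs_sub_le hw.le hv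
  have hx' : ‖horizontal x‖ < 1 - √d * w := (norm_horizontal_le x).trans_lt (mem_ball_zero_iff.1 hx)
  have hxball : horizontal x ∈ ball 0 1 := mem_ball_zero_iff.2 (by nlinarith [Real.sqrt_nonneg d])
  have hzball : z ∈ ball 0 1 := mem_ball.2 <| by
    linarith [dist_triangle z (horizontal x) 0, dist_comm z (horizontal x),
      dist_zero_right (horizontal x)]
  have hφz := (hφ _ hxball _ hzball).trans (mul_le_mul_of_nonneg_left hxz hK)
  have hh : 0 ≤ h := (abs_nonneg _).trans hlast
  refine mem_iUnion.2 ⟨v, fun i => Fin.lastCases ?_ (fun i => ?_) i⟩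
  · simp only [graphLift, PiLp.toLp_apply, Fin.snoc_last]
    linarith [abs_sub_le (x (Fin.last d)) (φ (horizontal x)) (φ z)]
  · simp only [graphLift, gridPoint, PiLp.toLp_apply, Fin.snoc_castSucc]
    have : 0 ≤ K * √d * w := by positivity
    linarith [hv i]

lemma volume_graphSlab_inter_ball_le
    (hφ : ∀ x ∈ ball (0 : 𝔼 d) 1, ∀ y ∈ ball (0 : 𝔼 d) 1, |φ x - φ y| ≤ K * dist x y)
    (hK : 0 ≤ K) {N : ℕ} (hN : 0 < N) {w R h : ℝ} (hw : 0 < w) (hR : R ≤ N * w) (hh : 0 ≤ h)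
    (p : 𝔼 d) :
    volume (graphSlab φ p R h ∩ ball 0 (1 - √d * w)) ≤
      ENNReal.ofReal (N ^ d * (2 * (h + (1 + K * √d) * w)) ^ (d + 1)) :=
  calc volume (graphSlab φ p R h ∩ ball 0 (1 - √d * w))
      ≤ volume (⋃ v : Fin d → Fin N,
          cube (d + 1) (graphLift φ (gridPoint p N w v)) (h + (1 + K * √d) * w)) :=
        measure_mono (graphSlab_inter_ball_subset_iUnion_cube hφ hK hN hw hR p)
    _ ≤ ∑ v : Fin d → Fin N,
          volume (cube (d + 1) (graphLift φ (gridPoint p N w v)) (h + (1 + K * √d) * w)) :=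
        measure_iUnion_fintype_le _ _
    _ = ENNReal.ofReal (N ^ d * (2 * (h + (1 + K * √d) * w)) ^ (d + 1)) := by
        simp only [volume_cube _ (by positivity : 0 ≤ h + (1 + K * √d) * w), Finset.sum_const,
          Finset.card_univ, Fintype.card_fun, Fintype.card_fin, nsmul_eq_mul]
        rw [ENNReal.ofReal_mul (by positivity), ← ENNReal.ofReal_natCast]
        push_cast
        rfl

end Graph

section Whitney

variable {n : ℕ} {U : Set (𝔼 n)} {c : ℕ → 𝔼 n} {r : ℕ → ℝ}

lemma IsWhitneyOf.finite_and_ncard_le (hW : IsWhitneyOf n U c r) {A : Set ℕ} {S : Set (𝔼 n)}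
    {a V : ℝ} (ha : 0 < a) (hV : 0 ≤ V) (hra : ∀ k ∈ A, a ≤ r k)
    (hS : ∀ k ∈ A, cube n (c k) (r k) ⊆ S) (hvol : volume S ≤ ENNReal.ofReal V) :
    A.Finite ∧ (A.ncard : ℝ) ≤ V / (2 * a) ^ n :=
  finite_and_ncard_le_of_pairwiseDisjoint volume (by positivity) hV
    (fun _ _ => isOpen_interior.measurableSet)
    (fun k _ k' _ hne => disjoint_iff_inter_eq_empty.2 (hW.2.2.1 k k' hne))
    (fun k hk => (ENNReal.ofReal_le_ofReal (by gcongr; exact hra k hk)).trans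
      (volume_interior_cube_ge _ (ha.trans_le (hra k hk))))
    (fun k hk => interior_subset.trans (hS k hk)) hvol

lemma IsWhitneyOf.exists_mem_frontier_forall_dist_lt (hW : IsWhitneyOf n U c r)
    (hU : (frontier U).Nonempty) (k : ℕ) {δ : ℝ} (hδ : 0 < δ)
    (hdiam : diam (cube n (c k) (r k)) ≤ δ) :
    ∃ y ∈ frontier U, ∀ x ∈ cube n (c k) (r k), dist x y < 6 * δ := by
  obtain ⟨y, hy, hdist⟩ := exists_forall_dist_lt_of_sDist_lt (m := 5 * δ) (t := frontier U)
    (isBounded_cube _ (hW.1 k).le) ⟨c k, mem_cube_self _ (hW.1 k).le⟩ hU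
    (by linarith [(hW.2.2.2 k).2])
  exact ⟨y, hy, fun x hx => (hdist x hx).trans_le (by linarith)⟩

end Whitney

section Families

variable {d : ℕ} {K : ℝ} {Ω : Set (𝔼 (d + 1))} {φ : 𝔼 d → ℝ} {c : ℕ → 𝔼 (d + 1)} {r : ℕ → ℝ}

lemma IsLipGraphDomain.apply_last_eq (hLip : IsLipGraphDomain d K Ω φ) {y : 𝔼 (d + 1)}
    (hy : y ∈ frontier (Ω ∩ ball 0 1)) (hy₁ : y ∈ ball 0 1) :
    y (Fin.last d) = φ (horizontal y) := by
  have h : y ∈ frontier Ω ∩ ball 0 1 := by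
    rw [← frontier_inter_open_inter isOpen_ball]
    exact ⟨hy, hy₁⟩
  rw [hLip.2.2.2] at h
  exact h.1

lemma memF.cube_subset {s : ℤ} {k : ℕ} (hk : memF d Ω c r s k) (hr : 0 ≤ r k) :
    cube (d + 1) (c k) (r k) ⊆ Ω ∩ ball 0 (1 / 4) :=
  (cube_mono _ (by linarith)).trans hk.2.2

lemma memF.le_radius {s : ℤ} {k : ℕ} (hk : memF d Ω c r s k) (hr : 0 < r k) :
    (2 : ℝ) ^ (-s) / (4 * (d + 1)) ≤ r k := by
  have hsqrt : √((d + 1 : ℕ) : ℝ) ≤ d + 1 :=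
    Real.sqrt_le_iff.2 ⟨by positivity, by push_cast; nlinarith⟩
  have hdiam := (hk.1.trans_le (diam_cube_le (c k) hr.le)).trans_le
    (by gcongr : 2 * √((d + 1 : ℕ) : ℝ) * r k ≤ 2 * (d + 1) * r k)
  rw [zpow_sub_one₀ two_ne_zero] at hdiam
  rw [div_le_iff₀ (by positivity)]
  linarith

lemma memFsj.sDist_le {s₀ s : ℤ} {j k l : ℕ} (h : memFsj d Ω c r s₀ k s j l) :
    sDist (cube (d + 1) (c l) (r l)) (cube (d + 1) (c k) (r k)) ≤ 32 * 2 ^ j * 2 ^ (-s₀) := by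
  have h' : sDist (cube (d + 1) (c l) (r l)) (cube (d + 1) (c k) (r k)) ≤
      2 ^ (-s₀ + j + 5) := by
    obtain ⟨-, h⟩ := h
    split_ifs at h with hj
    · simpa [hj] using h
    · exact h.2
  rw [zpow_add₀ two_ne_zero, zpow_add₀ two_ne_zero, zpow_natCast] at h'
  linarith

lemma cube_subset_closedBall_of_memFsj (hW : IsWhitneyOf (d + 1) (Ω ∩ ball 0 1) c r)
    (hfr : (frontier (Ω ∩ ball 0 1)).Nonempty) {s₀ s : ℤ} {j l k₁ k : ℕ}
    (hk₁ : memF d Ω c r s₀ k₁ ∧ memFsj d Ω c r s₀ k₁ s j l)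
    (hk : memF d Ω c r s₀ k ∧ memFsj d Ω c r s₀ k s j l) :
    cube (d + 1) (c k) (r k) ⊆ closedBall (c l) (74 * 2 ^ j * 2 ^ (-s₀)) := by
  set δ : ℝ := 2 ^ (-s₀)
  have hδ : 0 < δ := by positivity
  have hδη : δ ≤ 2 ^ j * δ := le_mul_of_one_le_left hδ.le (one_le_pow₀ one_le_two)
  have near : ∀ m, memF d Ω c r s₀ m ∧ memFsj d Ω c r s₀ m s j l →
      ∃ b ∈ cube (d + 1) (c l) (r l),
        ∀ x ∈ cube (d + 1) (c m) (r m), dist x b < 34 * 2 ^ j * δ := by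
    rintro m ⟨hm, hml⟩
    obtain ⟨b, hb, hdist⟩ := exists_forall_dist_lt_of_sDist_lt (m := 33 * 2 ^ j * δ)
      (isBounded_cube _ (hW.1 m).le) ⟨c m, mem_cube_self _ (hW.1 m).le⟩
      ⟨c l, mem_cube_self _ (hW.1 l).le⟩ (by rw [sDist_comm]; linarith [hml.sDist_le])
    exact ⟨b, hb, fun x hx => (hdist x hx).trans_le (by linarith [hm.2.1])⟩
  obtain ⟨b₁, hb₁, hb₁k₁⟩ := near k₁ hk₁
  obtain ⟨y₁, hy₁, hk₁y₁⟩ := hW.exists_mem_frontier_forall_dist_lt hfr k₁ hδ hk₁.1.2.1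
  have hck₁ := mem_cube_self (c k₁) (hW.1 k₁).le
  have hdiam : diam (cube (d + 1) (c l) (r l)) ≤ 40 * 2 ^ j * δ :=
    calc diam (cube (d + 1) (c l) (r l))
        ≤ sDist (cube (d + 1) (c l) (r l)) (frontier (Ω ∩ ball 0 1)) := (hW.2.2.2 l).1
      _ ≤ dist b₁ y₁ := sDist_le_dist hb₁ hy₁
      _ ≤ dist (c k₁) b₁ + dist (c k₁) y₁ := dist_triangle_left _ _ _
      _ ≤ 40 * 2 ^ j * δ := by linarith [hb₁k₁ _ hck₁, hk₁y₁ _ hck₁]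
  obtain ⟨b, hb, hkb⟩ := near k hk
  intro x hx
  calc dist x (c l) ≤ dist x b + dist b (c l) := dist_triangle _ _ _
    _ ≤ 74 * 2 ^ j * δ := by linarith [hkb x hx, dist_le_diam_cube (hW.1 l).le hb]

lemma memF.cube_subset_graphSlab (hLip : IsLipGraphDomain d K Ω φ) (hK : 0 ≤ K)
    (hW : IsWhitneyOf (d + 1) (Ω ∩ ball 0 1) c r) (hfr : (frontier (Ω ∩ ball 0 1)).Nonempty)
    {s₀ : ℤ} {k : ℕ} (hk : memF d Ω c r s₀ k) (hδ : (2 : ℝ) ^ (-s₀) ≤ 1 / 8) {q : 𝔼 (d + 1)} {R : ℝ}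
    (hq : cube (d + 1) (c k) (r k) ⊆ closedBall q R) :
    cube (d + 1) (c k) (r k) ⊆ graphSlab φ (horizontal q) R (6 * (1 + K) * 2 ^ (-s₀)) := by
  intro x hx
  obtain ⟨y, hy, hxy⟩ := hW.exists_mem_frontier_forall_dist_lt hfr k (by positivity) hk.2.1
  have hx₄ : ‖x‖ < 1 / 4 := mem_ball_zero_iff.1 (hk.cube_subset (hW.1 k).le hx).2
  have hy₁ : y ∈ ball 0 1 := mem_ball.2 <| by
    linarith [dist_triangle_left y 0 x, dist_zero_right x, hxy x hx]
  have hxball : horizontal x ∈ ball 0 1 :=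
    mem_ball_zero_iff.2 ((norm_horizontal_le x).trans_lt (by linarith))
  have hyball : horizontal y ∈ ball 0 1 :=
    mem_ball_zero_iff.2 ((norm_horizontal_le y).trans_lt (mem_ball_zero_iff.1 hy₁))
  refine ⟨fun i => (abs_apply_sub_le_dist x q i.castSucc).trans (hq hx), ?_⟩
  calc |x (Fin.last d) - φ (horizontal x)| ≤ (1 + K) * dist x y :=
        abs_last_sub_le_of_mem_graph hLip.2.1 hK hxball hyball (hLip.apply_last_eq hy hy₁)
    _ ≤ 6 * (1 + K) * 2 ^ (-s₀) := by nlinarith [hxy x hx]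

end Families

section Counting

variable {d : ℕ} {K : ℝ} {Ω : Set (𝔼 (d + 1))} {φ : 𝔼 d → ℝ} {c : ℕ → 𝔼 (d + 1)} {r : ℕ → ℝ}
  {s₀ : ℤ} {A : Set ℕ}

lemma finite_and_ncard_le_of_le_eighth (hLip : IsLipGraphDomain d K Ω φ) (hK : 0 ≤ K)
    (hW : IsWhitneyOf (d + 1) (Ω ∩ ball 0 1) c r) (hfr : (frontier (Ω ∩ ball 0 1)).Nonempty)
    {s : ℤ} {j l k₁ : ℕ} (hA : ∀ k ∈ A, memF d Ω c r s₀ k ∧ memFsj d Ω c r s₀ k s j l)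
    (hk₁ : k₁ ∈ A) (hδ₈ : (2 : ℝ) ^ (-s₀) ≤ 1 / 8) :
    A.Finite ∧
      (A.ncard : ℝ) ≤
        (75 * (d + 1)) ^ d * (28 * (d + 1) * (1 + K)) ^ (d + 1) * ((2 : ℝ) ^ j) ^ d := by
  set δ : ℝ := 2 ^ (-s₀)
  set w : ℝ := δ / (d + 1)
  set N := ⌈74 * (d + 1) * (2 : ℝ) ^ j⌉₊
  have hδ : 0 < δ := by positivity
  have hN : 0 < N := Nat.ceil_pos.2 (by positivity)
  have hw : (d + 1) * w = δ := by simp only [w]; field_simp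
  have hsqrt : √(d : ℝ) ≤ d + 1 := Real.sqrt_le_iff.2 ⟨by positivity, by nlinarith⟩
  have hR : 74 * 2 ^ j * δ ≤ N * w :=
    calc 74 * 2 ^ j * δ = 74 * (d + 1) * 2 ^ j * w := by rw [← hw]; ring
      _ ≤ N * w := by gcongr; exact Nat.le_ceil _
  have hNle : (N : ℝ) ≤ 75 * (d + 1) * 2 ^ j := by
    have := Nat.ceil_lt_add_one (by positivity : (0 : ℝ) ≤ 74 * (d + 1) * 2 ^ j)
    nlinarith [one_le_pow₀ (M₀ := ℝ) one_le_two (n := j)]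
  have hρ : (1 + K * √d) * w ≤ (1 + K) * δ :=
    calc (1 + K * √d) * w ≤ (1 + K) * ((d + 1) * w) := by
          nlinarith [mul_le_mul_of_nonneg_left hsqrt hK]
      _ = (1 + K) * δ := by rw [hw]
  obtain ⟨hfin, hcard⟩ := hW.finite_and_ncard_le (A := A)
    (S := graphSlab φ (horizontal (c l)) (74 * 2 ^ j * δ) (6 * (1 + K) * δ) ∩ ball 0 (1 - √d * w))
    (V := (75 * (d + 1) * 2 ^ j) ^ d * (2 * (7 * (1 + K) * δ)) ^ (d + 1))
    (by positivity) (by positivity) (fun k hk => (hA k hk).1.le_radius (hW.1 k))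
    (fun k hk => subset_inter
      ((hA k hk).1.cube_subset_graphSlab hLip hK hW hfr hδ₈
        (cube_subset_closedBall_of_memFsj hW hfr (hA k₁ hk₁) (hA k hk)))
      (((hA k hk).1.cube_subset (hW.1 k).le).trans
        (inter_subset_right.trans (ball_subset_ball (by nlinarith)))))
    ((volume_graphSlab_inter_ball_le hLip.2.1 hK hN (by positivity) hR (by positivity) _).trans
      (ENNReal.ofReal_le_ofReal (by gcongr; linarith)))
  refine ⟨hfin, hcard.trans_eq ?_⟩
  rw [mul_div_assoc, ← div_pow, mul_pow,
    show 2 * (7 * (1 + K) * δ) / (2 * (δ / (4 * (d + 1)))) = 28 * (d + 1) * (1 + K) by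
      field_simp; ring]
  ring

lemma finite_and_ncard_le_of_eighth_lt (hW : IsWhitneyOf (d + 1) (Ω ∩ ball 0 1) c r)
    (hA : ∀ k ∈ A, memF d Ω c r s₀ k) (hδ₈ : 1 / 8 < (2 : ℝ) ^ (-s₀)) :
    A.Finite ∧ (A.ncard : ℝ) ≤ (8 * (d + 1)) ^ (d + 1) := by
  obtain ⟨hfin, hcard⟩ := hW.finite_and_ncard_le (A := A) (a := 1 / (32 * (d + 1)))
    (by positivity) (by positivity)
    (fun k hk => ((hA k hk).le_radius (hW.1 k)).trans' (by
      rw [div_le_div_iff₀ (by positivity) (by positivity)]; nlinarith))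
    (fun k hk => ((hA k hk).cube_subset (hW.1 k).le).trans
      (inter_subset_right.trans (ball_zero_subset_cube_zero _)))
    (volume_cube _ (by norm_num)).le
  refine ⟨hfin, hcard.trans_eq ?_⟩
  rw [← div_pow]
  congr 1
  field_simp
  ring

end Counting

/-- Lemma 2.7: for a fixed cube `Q_l ∈ F^s` and `j ≥ 0`, there are at most `C 2^{j(n-1)}`
cubes `Q_k ∈ F^{s₀}` such that `Q_l ∈ F^{s,j}_{Q_k}`, with `C = C(n, K)`. -/
theorem count_reference_cubes (d : ℕ) (K : ℝ) (hK : 0 ≤ K) :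
    ∃ C : ℝ, 0 < C ∧
      ∀ (Ω : Set (EuclideanSpace ℝ (Fin (d + 1)))) (φ : EuclideanSpace ℝ (Fin d) → ℝ)
        (c : ℕ → EuclideanSpace ℝ (Fin (d + 1))) (r : ℕ → ℝ),
        IsLipGraphDomain d K Ω φ → φ 0 = 0 →
        (0 : EuclideanSpace ℝ (Fin (d + 1))) ∈ frontier Ω →
        IsWhitneyOf (d + 1) (Ω ∩ ball 0 1) c r →
        ∀ (s₀ : ℤ), 2 ≤ s₀ → ∀ (s : ℤ), 2 ≤ s → ∀ (j : ℕ) (l : ℕ), memF d Ω c r s l →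
          {k : ℕ | memF d Ω c r s₀ k ∧ memFsj d Ω c r s₀ k s j l}.Finite ∧
          ({k : ℕ | memF d Ω c r s₀ k ∧ memFsj d Ω c r s₀ k s j l}.ncard : ℝ) ≤
            C * (2 : ℝ) ^ ((j : ℤ) * d) := by
  refine ⟨(75 * (d + 1)) ^ d * (28 * (d + 1) * (1 + K)) ^ (d + 1), by positivity, ?_⟩
  intro Ω φ c r hLip _ h0 hW s₀ _ s _ j l _
  set A := {k | memF d Ω c r s₀ k ∧ memFsj d Ω c r s₀ k s j l}
  rcases A.eq_empty_or_nonempty with hA | ⟨k₁, hk₁⟩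
  · simp only [hA, finite_empty, ncard_empty, Nat.cast_zero, true_and]
    positivity
  have hfr : (frontier (Ω ∩ ball 0 1)).Nonempty := by
    have h0' : (0 : 𝔼 (d + 1)) ∈ frontier Ω ∩ ball 0 1 := ⟨h0, mem_ball_self one_pos⟩
    rw [← frontier_inter_open_inter isOpen_ball] at h0'
    exact ⟨0, h0'.1⟩
  rw [zpow_mul, zpow_natCast, zpow_natCast]
  rcases le_or_gt ((2 : ℝ) ^ (-s₀)) (1 / 8) with hδ | hδ
  · exact finite_and_ncard_le_of_le_eighth hLip hK hW hfr (fun _ hk => hk) hk₁ hδ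
  obtain ⟨hfin, hcard⟩ := finite_and_ncard_le_of_eighth_lt hW (A := A) (fun _ hk => hk.1) hδ
  refine ⟨hfin, hcard.trans ?_⟩
  calc (8 * (d + 1) : ℝ) ^ (d + 1)
      ≤ (28 * (d + 1) * (1 + K)) ^ (d + 1) := pow_le_pow_left₀ (by positivity) (by nlinarith) _
    _ ≤ (75 * (d + 1)) ^ d * (28 * (d + 1) * (1 + K)) ^ (d + 1) :=
        le_mul_of_one_le_left (by positivity) (one_le_pow₀ (by linarith))
    _ ≤ _ := le_mul_of_one_le_right (by positivity) (one_le_pow₀ (one_le_pow₀ one_le_two))
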